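/- For every integer n ≥ 2, the chromatic number of the total cyclic interval graph satisfies χ(CG(n)) ≥ n·H_{⌊(n−1)/2⌋} + (1 − p(n)), where the chromatic number is interpreted as a real number on the left-hand side. -/

import Mathlib

/-- A partition of `{0,…,n-1}` (modeled as `Fin n`) into an unordered pair of nonempty
disjoint subsets covering everything, modeled as a 2-element finset of parts. -/
def TKPart (n : ℕ) (P : Finset (Finset (Fin n))) : Prop :=
  P.card = 2 ∧ (∀ A ∈ P, A.Nonempty) ∧
    (∀ A ∈ P, ∀ B ∈ P, A ≠ B → Disjoint A B) ∧ P.sup id = Finset.univ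

/-- Vertices of the total Kneser graph. -/
abbrev TKVert (n : ℕ) := {P : Finset (Finset (Fin n)) // TKPart n P}

/-- The total Kneser graph `KG(n)`: two distinct partitions are adjacent iff they are
nested, i.e. some part of one is contained in some part of the other. -/
def KG (n : ℕ) : SimpleGraph (TKVert n) where
  Adj P Q := P ≠ Q ∧
    ((∃ A ∈ P.1, ∃ C ∈ Q.1, A ⊆ C) ∨ (∃ C ∈ Q.1, ∃ A ∈ P.1, C ⊆ A))
  symm := ⟨by
    rintro P Q ⟨hne, h⟩
    refine ⟨hne.symm, ?_⟩
    rcases h with ⟨A, hA, C, hC, hAC⟩ | ⟨C, hC, A, hA, hCA⟩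
    · exact Or.inr ⟨A, hA, C, hC, hAC⟩
    · exact Or.inl ⟨C, hC, A, hA, hCA⟩⟩
  loopless := ⟨fun P h => h.1 rfl⟩

/-- `A ⊆ Fin n` is a cyclic interval `{i, i+1, …, i+k-1} (mod n)` with `1 ≤ k ≤ n-1`. -/
def IsCyclicInterval {n : ℕ} (A : Finset (Fin n)) : Prop :=
  ∃ i k : ℕ, 1 ≤ k ∧ k ≤ n - 1 ∧
    (↑A : Set (Fin n)) = {x : Fin n | ∃ j < k, (x : ℕ) = (i + j) % n}

/-- The vertices of the total cyclic interval graph: partitions both of whose parts are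
cyclic intervals. -/
def CGSet (n : ℕ) : Set (TKVert n) := {P | ∀ A ∈ P.1, IsCyclicInterval A}

/-- The total cyclic interval graph `CG(n)`, the induced subgraph of `KG(n)` on partitions
into cyclic intervals. -/
def CG (n : ℕ) : SimpleGraph (CGSet n) := (KG n).induce (CGSet n)

/-!
Every vertex of `CG n` is `{A, Aᶜ}` for an arc `A = {s, s + 1, …, s + k - 1}`; it has two cut
points `s` and `s + k`, a cut point `c` standing for the gap between `c - 1` and `c`. Let `I` be
an independent set containing `{A, Aᶜ}`. Every other member of `I` crosses `A`, so it has a cut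
point strictly inside `A`, and two members sharing a cut point are nested, hence adjacent. Thus
`#I ≤ #A`. Weighting each vertex by the inverse length of its shorter part therefore gives each
colour class weight at most `1`, while the total weight is `n H_{⌊(n-1)/2⌋}`, plus `1` from the
`n / 2` vertices made of two halves when `n` is even.
-/

open Finset
open scoped Fin.NatCast Fin.CommRing

theorem SimpleGraph.Coloring.sum_le_card {V ι α : Type*} [Fintype α] {G : SimpleGraph V}
    (C : G.Coloring α) (f : ι → V) (s : Finset ι) (w : ι → ℝ)
    (hw : ∀ t ⊆ s, G.IsIndepSet (f '' t) → ∑ x ∈ t, w x ≤ 1) :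
    ∑ x ∈ s, w x ≤ Fintype.card α := by
  classical
  rw [← sum_fiberwise s (fun x => C (f x)) w]
  calc ∑ c, ∑ x ∈ s with C (f x) = c, w x ≤ ∑ _c : α, (1 : ℝ) := by
        refine sum_le_sum fun c _ => hw _ (filter_subset _ _) ?_
        rintro _ ⟨x, hx, rfl⟩ _ ⟨y, hy, rfl⟩ - hadj
        exact C.valid hadj (by rw [(mem_filter.1 hx).2, (mem_filter.1 hy).2])
    _ = Fintype.card α := by simp

theorem sum_inv_le_one_of_card_le {ι : Type*} {t : Finset ι} {g : ι → ℕ}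
    (h : ∀ x ∈ t, #t ≤ g x) : ∑ x ∈ t, (g x : ℝ)⁻¹ ≤ 1 := by
  rcases t.eq_empty_or_nonempty with rfl | ht
  · simp
  have hpos : (0 : ℝ) < #t := Nat.cast_pos.2 ht.card_pos
  calc ∑ x ∈ t, (g x : ℝ)⁻¹ ≤ ∑ _x ∈ t, (#t : ℝ)⁻¹ :=
        sum_le_sum fun x hx => inv_anti₀ hpos (by exact_mod_cast h x hx)
    _ = 1 := by rw [sum_const, nsmul_eq_mul, mul_inv_cancel₀ hpos.ne']

section Arc

variable {n : ℕ}

def arc (s : Fin n) (k : ℕ) : Finset (Fin n) := {x | (x - s).val < k}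

@[simp] lemma mem_arc {s x : Fin n} {k : ℕ} : x ∈ arc s k ↔ (x - s).val < k := by
  simp [arc]

lemma arc_mono {s : Fin n} {k l : ℕ} (h : k ≤ l) : arc s k ⊆ arc s l := fun x hx => by
  simp only [mem_arc] at hx ⊢
  omega

variable [NeZero n]

lemma add_natCast_mem_arc {s : Fin n} {j k : ℕ} (h : j < k) : s + (j : Fin n) ∈ arc s k := by
  simpa using (Nat.mod_le j n).trans_lt h

lemma card_arc (s : Fin n) {k : ℕ} (hk : k ≤ n) : #(arc s k) = k := by
  have : arc s k = ({i : Fin n | (i : ℕ) < k} : Finset (Fin n)).map (addLeftEmbedding s) := by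
    ext x
    simp only [mem_arc, mem_map, mem_filter, mem_univ, true_and, addLeftEmbedding_apply]
    exact ⟨fun h => ⟨x - s, h, add_sub_cancel _ _⟩, by rintro ⟨i, hi, rfl⟩; simpa using hi⟩
  rw [this, card_map, Fin.card_filter_val_lt, min_eq_right hk]

lemma coe_arc_natCast (i k : ℕ) :
    (arc (i : Fin n) k : Set (Fin n)) = {x : Fin n | ∃ j < k, (x : ℕ) = (i + j) % n} := by
  ext x
  rw [mem_coe, Set.mem_ofPred_eq]
  constructor
  · intro hx
    refine ⟨_, mem_arc.1 hx, ?_⟩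
    conv_lhs => rw [← add_sub_cancel (i : Fin n) x]
    rw [Fin.val_add, Fin.val_natCast, Nat.mod_add_mod]
  · rintro ⟨j, hj, hx⟩
    have : x = (i : Fin n) + (j : Fin n) := Fin.ext (by simp [Fin.val_add, hx, Nat.add_mod])
    exact this ▸ add_natCast_mem_arc hj

lemma self_mem_arc (s : Fin n) {k : ℕ} (hk : 0 < k) : s ∈ arc s k := by
  simpa using hk

lemma sub_one_notMem_arc (s : Fin n) {k : ℕ} (hk : k < n) : s - 1 ∉ arc s k := by
  obtain ⟨m, rfl⟩ := Nat.exists_eq_succ_of_ne_zero (NeZero.ne n)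
  simp only [mem_arc, sub_sub_cancel_left, Fin.coe_neg_one]
  omega

lemma eq_of_mem_arc_of_sub_one_notMem {s c : Fin n} {k : ℕ} (hc : c ∈ arc s k)
    (hc' : c - 1 ∉ arc s k) : c = s := by
  by_contra hcs
  rw [mem_arc, sub_right_comm, Fin.val_sub_one_of_ne_zero (sub_ne_zero.2 hcs)] at hc'
  exact hc' ((Nat.sub_le _ _).trans_lt (mem_arc.1 hc))

lemma exists_boundary_mem_arc {s x y : Fin n} {k : ℕ} {B : Finset (Fin n)}
    (hx : x ∈ arc s k) (hy : y ∈ arc s k) (hxB : x ∈ B) (hyB : y ∉ B) :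
    ∃ c ∈ arc s k, c - 1 ∈ arc s k ∧ (c ∈ B ↔ c - 1 ∉ B) := by
  by_contra hno
  have hconst : ∀ j < k, (s + (j : Fin n) ∈ B ↔ s ∈ B) := by
    intro j
    induction j with
    | zero => simp
    | succ j ih =>
      intro hj
      have hprev : s + ((j + 1 : ℕ) : Fin n) - 1 = s + (j : Fin n) := by push_cast; ring
      rw [← ih (by omega), ← hprev]
      by_contra hflip
      exact hno ⟨_, add_natCast_mem_arc hj, hprev ▸ add_natCast_mem_arc (by omega), by tauto⟩
  have hmem : ∀ z ∈ arc s k, (z ∈ B ↔ s ∈ B) := fun z hz => by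
    simpa using hconst _ (mem_arc.1 hz)
  exact hyB ((hmem y hy).2 ((hmem x hx).1 hxB))

lemma compl_arc (s : Fin n) {k : ℕ} (hk : k < n) :
    (arc s k)ᶜ = arc (s + (k : Fin n)) (n - k) := by
  ext x
  have hkval : ((k : Fin n) : ℕ) = k := Fin.val_cast_of_lt hk
  rw [mem_compl, mem_arc, mem_arc, ← sub_sub, not_lt]
  rcases le_or_gt (k : Fin n) (x - s) with h | h
  · rw [Fin.coe_sub_iff_le.2 h, hkval]
    have := (x - s).isLt
    omega
  · rw [Fin.coe_sub_iff_lt.2 h, hkval]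
    rw [Fin.lt_def, hkval] at h
    omega

lemma isCyclicInterval_arc (s : Fin n) {k : ℕ} (hk0 : 0 < k) (hkn : k < n) :
    IsCyclicInterval (arc s k) :=
  ⟨s, k, hk0, by omega, by rw [← coe_arc_natCast, Fin.cast_val_eq_self]⟩

lemma IsCyclicInterval.exists_eq_arc {A : Finset (Fin n)} (hA : IsCyclicInterval A) :
    ∃ s k, 0 < k ∧ k < n ∧ A = arc s k := by
  obtain ⟨i, k, hk0, hkn, hA⟩ := hA
  exact ⟨i, k, hk0, by omega, by rw [← coe_inj, hA, coe_arc_natCast]⟩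

lemma arc_injective {s t : Fin n} {k l : ℕ} (hk0 : 0 < k) (hkn : k < n) (hl : l ≤ n)
    (h : arc s k = arc t l) : s = t ∧ k = l := by
  refine ⟨eq_of_mem_arc_of_sub_one_notMem (s := t) (k := l) ?_ ?_, ?_⟩
  · exact h ▸ self_mem_arc s hk0
  · exact h ▸ sub_one_notMem_arc s hkn
  · rw [← card_arc s hkn.le, ← card_arc t hl, h]

end Arc

lemma TKPart.compl_mem {n : ℕ} {P : Finset (Finset (Fin n))} (hP : TKPart n P)
    {A : Finset (Fin n)} (hA : A ∈ P) : Aᶜ ∈ P := by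
  obtain ⟨B, C, hBC, rfl⟩ := card_eq_two.1 hP.1
  have hcompl : IsCompl B C :=
    ⟨hP.2.2.1 B (by simp) C (by simp) hBC, codisjoint_iff.2 (by simpa using hP.2.2.2)⟩
  rcases mem_insert.1 hA with rfl | hA
  · simp [hcompl.compl_eq]
  · simp [mem_singleton.1 hA, hcompl.symm.compl_eq]

lemma tkPart_pair_compl {n : ℕ} {A : Finset (Fin n)} (hA : A.Nonempty) (hA' : Aᶜ.Nonempty) :
    TKPart n {A, Aᶜ} := by
  refine ⟨card_pair fun h => ?_, ?_, ?_, by simp⟩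
  · obtain ⟨x, hx⟩ := hA
    exact (mem_compl.1 (h ▸ hx)) hx
  · simp [hA, hA']
  · simp only [mem_insert, mem_singleton]
    rintro B (rfl | rfl) C (rfl | rfl) hBC <;> simp_all [disjoint_compl_right, disjoint_compl_left]

section Cut

variable {n : ℕ} [NeZero n]

def IsCut (P : TKVert n) (c : Fin n) : Prop := ∃ B ∈ P.1, c ∈ B ∧ c - 1 ∉ B

lemma exists_isCut_of_not_adj {P Q : TKVert n} {s : Fin n} {k : ℕ} (hA : arc s k ∈ P.1)
    (hne : P ≠ Q) (hPQ : ¬ (KG n).Adj P Q) : ∃ c ∈ arc s k, c - 1 ∈ arc s k ∧ IsCut Q c := by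
  obtain ⟨B, hB⟩ : Q.1.Nonempty := card_pos.1 (by rw [Q.2.1]; norm_num)
  have hBc := Q.2.compl_mem hB
  obtain ⟨y, hy, hyB⟩ := not_subset.1 fun h => hPQ ⟨hne, .inl ⟨_, hA, B, hB, h⟩⟩
  obtain ⟨x, hx, hxB⟩ := not_subset.1 fun h => hPQ ⟨hne, .inl ⟨_, hA, _, hBc, h⟩⟩
  obtain ⟨c, hc, hc1, hflip⟩ := exists_boundary_mem_arc hx hy (by simpa using hxB) hyB
  refine ⟨c, hc, hc1, ?_⟩
  by_cases hcB : c ∈ B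
  · exact ⟨B, hB, hcB, hflip.1 hcB⟩
  · exact ⟨Bᶜ, hBc, by simpa using hcB, by simpa using hflip.not.1 hcB⟩

lemma IsCut.exists_arc_mem {P : CGSet n} {c : Fin n} (h : IsCut P.1 c) :
    ∃ k, arc c k ∈ P.1.1 := by
  obtain ⟨B, hB, hc, hc1⟩ := h
  obtain ⟨s, k, -, -, rfl⟩ := (P.2 B hB).exists_eq_arc
  exact ⟨k, eq_of_mem_arc_of_sub_one_notMem hc hc1 ▸ hB⟩

lemma adj_or_eq_of_isCut {P Q : CGSet n} {c : Fin n} (hP : IsCut P.1 c) (hQ : IsCut Q.1 c) :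
    (CG n).Adj P Q ∨ P = Q := by
  obtain ⟨k, hk⟩ := hP.exists_arc_mem
  obtain ⟨l, hl⟩ := hQ.exists_arc_mem
  by_cases h : P = Q
  · exact .inr h
  refine .inl ⟨fun h' => h (Subtype.ext h'), ?_⟩
  rcases le_total k l with hkl | hlk
  · exact .inl ⟨_, hk, _, hl, arc_mono hkl⟩
  · exact .inr ⟨_, hl, _, hk, arc_mono hlk⟩

theorem card_le_card_of_isIndepSet {I : Finset (CGSet n)} (hI : (CG n).IsIndepSet I)
    {P : CGSet n} (hP : P ∈ I) {A : Finset (Fin n)} (hA : A ∈ P.1.1) : #I ≤ #A := by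
  obtain ⟨s, k, hk0, hkn, rfl⟩ := (P.2 A hA).exists_eq_arc
  have hcut : ∀ Q ∈ I.erase P, ∃ c ∈ (arc s k).erase s, IsCut Q.1 c := by
    intro Q hQ
    obtain ⟨hQP, hQI⟩ := mem_erase.1 hQ
    obtain ⟨c, hc, hc1, hQc⟩ := exists_isCut_of_not_adj hA (fun h => hQP (Subtype.ext h).symm)
      (hI hP hQI (Ne.symm hQP))
    exact ⟨c, mem_erase.2 ⟨fun h => sub_one_notMem_arc s hkn (h ▸ hc1), hc⟩, hQc⟩
  have hsep : ∀ c ∈ (arc s k).erase s, ({Q ∈ I.erase P | IsCut Q.1 c} : Set _).Subsingleton := by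
    rintro c - Q ⟨hQ, hQc⟩ Q' ⟨hQ', hQ'c⟩
    by_contra hne
    exact hI (mem_erase.1 hQ).2 (mem_erase.1 hQ').2 hne
      ((adj_or_eq_of_isCut hQc hQ'c).resolve_right hne)
  have := card_le_card_of_forall_subsingleton (fun (Q : CGSet n) c => IsCut Q.1 c) hcut hsep
  rw [card_erase_of_mem hP, card_erase_of_mem (self_mem_arc s hk0)] at this
  have := card_pos.2 ⟨P, hP⟩
  have := card_pos.2 ⟨s, self_mem_arc s hk0⟩
  omega

end Cut

abbrev ProperArc (n : ℕ) := {x : Fin n × ℕ // 0 < x.2 ∧ x.2 < n}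

section ArcVertex

variable {n : ℕ} [NeZero n]

def arcVertex (x : ProperArc n) : CGSet n :=
  ⟨⟨{arc x.1.1 x.1.2, (arc x.1.1 x.1.2)ᶜ}, tkPart_pair_compl ⟨_, self_mem_arc _ x.2.1⟩
      (by rw [compl_arc _ x.2.2]; exact ⟨_, self_mem_arc _ (by omega)⟩)⟩, by
    intro A hA
    rcases mem_insert.1 hA with rfl | hA
    · exact isCyclicInterval_arc _ x.2.1 x.2.2
    · rw [mem_singleton.1 hA, compl_arc _ x.2.2]
      exact isCyclicInterval_arc _ (by omega) (by omega)⟩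

lemma arc_mem_arcVertex (x : ProperArc n) : arc x.1.1 x.1.2 ∈ (arcVertex x).1.1 :=
  mem_insert_self _ _

lemma arcVertex_inj {x y : ProperArc n} (hx : 2 * x.1.2 ≤ n) (hy : 2 * y.1.2 ≤ n)
    (hx' : 2 * x.1.2 = n → x.1.1.val < n / 2) (hy' : 2 * y.1.2 = n → y.1.1.val < n / 2)
    (h : arcVertex x = arcVertex y) : x = y := by
  obtain ⟨⟨s, k⟩, hk0, hkn⟩ := x
  obtain ⟨⟨t, l⟩, hl0, hln⟩ := y
  have hmem : arc s k ∈ (arcVertex ⟨(t, l), hl0, hln⟩).1.1 := h ▸ arc_mem_arcVertex _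
  rcases mem_insert.1 hmem with heq | heq
  · obtain ⟨rfl, rfl⟩ := arc_injective hk0 hkn hln.le heq
    rfl
  · rw [mem_singleton, compl_arc t hln] at heq
    obtain ⟨rfl, rfl⟩ := arc_injective hk0 hkn (Nat.sub_le _ _) heq
    dsimp only at hx hy hx' hy'
    have : (t + (l : Fin n)).val = t.val + l := by
      rw [Fin.val_add, Fin.val_cast_of_lt hln, Nat.mod_eq_of_lt (by omega)]
    omega

end ArcVertex

/-- Indexes every vertex of `CG n` once, by its shorter part; of two complementary halves, by the
one starting below `n / 2`. -/
def shortArcs (n : ℕ) : Finset (Fin n × ℕ) :=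
  univ ×ˢ Icc 1 ((n - 1) / 2) ∪
    if Even n then ({s | s.val < n / 2} : Finset (Fin n)) ×ˢ {n / 2} else ∅

lemma mem_shortArcs {n : ℕ} {x : Fin n × ℕ} (hx : x ∈ shortArcs n) :
    0 < x.2 ∧ 2 * x.2 ≤ n ∧ (2 * x.2 = n → x.1.val < n / 2) := by
  simp only [shortArcs, mem_union, mem_product, mem_Icc] at hx
  split_ifs at hx with h
  · simp only [mem_product, mem_filter, mem_univ, true_and, mem_singleton] at hx
    obtain ⟨k, rfl⟩ := h
    omega
  · simp only [notMem_empty, or_false] at hx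
    omega

lemma sum_shortArcs (n : ℕ) [NeZero n] :
    ∑ x ∈ shortArcs n, (x.2 : ℝ)⁻¹ =
      (n : ℝ) * ((harmonic ((n - 1) / 2) : ℚ) : ℝ) + (1 - ((n % 2 : ℕ) : ℝ)) := by
  have hdisj : Disjoint (univ ×ˢ Icc 1 ((n - 1) / 2))
      (if Even n then ({s | s.val < n / 2} : Finset (Fin n)) ×ˢ {n / 2} else ∅) := by
    split_ifs with h
    · simp only [disjoint_left, mem_product, mem_Icc, mem_singleton]
      obtain ⟨k, rfl⟩ := h
      omega
    · exact disjoint_empty_right _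
  rw [shortArcs, sum_union hdisj]
  congr 1
  · simp [sum_product, harmonic_eq_sum_Icc]
  split_ifs with h
  · have h2 : n % 2 = 0 := Nat.even_iff.1 h
    have hpos : (0 : ℝ) < (n / 2 : ℕ) := by
      have := NeZero.ne n
      exact_mod_cast (by omega : 0 < n / 2)
    have hcard : #({s | s.val < n / 2} : Finset (Fin n)) = n / 2 := by
      rw [Fin.card_filter_val_lt]
      omega
    simp [hcard, h2, hpos.ne']
  · rw [Nat.odd_iff.1 (Nat.not_even_iff_odd.1 h), sum_empty]
    norm_num

lemma card_le_of_isIndepSet_arcVertex {n : ℕ} [NeZero n] {t : Finset (ProperArc n)}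
    (ht : ∀ x ∈ t, x.1 ∈ shortArcs n) (hI : (CG n).IsIndepSet (arcVertex '' t))
    {x : ProperArc n} (hx : x ∈ t) : #t ≤ x.1.2 := by
  have hinj : Set.InjOn arcVertex (t : Set (ProperArc n)) := fun y hy z hz h => by
    obtain ⟨-, hy, hy'⟩ := mem_shortArcs (ht y hy)
    obtain ⟨-, hz, hz'⟩ := mem_shortArcs (ht z hz)
    exact arcVertex_inj hy hz hy' hz' h
  calc #t = #(t.image arcVertex) := (card_image_of_injOn hinj).symm
    _ ≤ #(arc x.1.1 x.1.2) := card_le_card_of_isIndepSet (by rwa [coe_image])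
        (mem_image_of_mem _ hx) (arc_mem_arcVertex x)
    _ = x.1.2 := card_arc _ x.2.2.le

/-- `χ(CG(n)) ≥ n·H_{⌊(n-1)/2⌋} + (1 - p(n))`, where `H_m` is the `m`-th harmonic number
and `p(n)` is the residue of `n` mod 2, the chromatic number being read as a real number. -/
theorem chromatic_CG_lower (n : ℕ) (hn : 2 ≤ n) :
    ∃ a : ℕ, (CG n).chromaticNumber = a ∧
      (n : ℝ) * ((harmonic ((n - 1) / 2) : ℚ) : ℝ) + (1 - ((n % 2 : ℕ) : ℝ)) ≤ (a : ℝ) := by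
  have : NeZero n := ⟨by omega⟩
  have hcol := (CG n).colorable_chromaticNumber_of_fintype
  refine ⟨_, (ENat.natCast_toNat
    (SimpleGraph.chromaticNumber_ne_top_iff_exists.2 ⟨_, hcol⟩)).symm, ?_⟩
  obtain ⟨C⟩ := hcol
  have hT : ∀ x ∈ shortArcs n, 0 < x.2 ∧ x.2 < n := fun x hx => by
    have := mem_shortArcs hx
    omega
  rw [← sum_shortArcs, ← sum_subtype_of_mem _ hT]
  refine (C.sum_le_card arcVertex _ (fun x : ProperArc n => (x.1.2 : ℝ)⁻¹)
    fun t ht hI => ?_).trans_eq (by simp)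
  exact sum_inv_le_one_of_card_le fun x hx =>
    card_le_of_isIndepSet_arcVertex (fun y hy => mem_subtype.1 (ht hy)) hI hx
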